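/- Let d ≥ 1 be odd, let q(z) = z₀² + z₁² + z₂² + z₃² on ℂ⁴, and let Q_E = {[z] ∈ ℙ³(ℂ) : q(z) = 0}. Let p₁, …, p_{2d-2} be distinct points of Q_E and let ℓ₁, …, ℓ₄ ⊆ ℂ⁴ be 2-dimensional complex subspaces with ℓᵢ ∩ ℓⱼ = {0} for i ≠ j, on each of which q vanishes identically, such that no pₖ lies in any ℙ(ℓⱼ). Then there do not exist homogeneous polynomials f₀,…,f₃ ∈ ℝ[s,t] of degree d, not all zero, such that the image of the associated map contains every pₖ and meets every ℙ(ℓⱼ). -/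

import Mathlib

/-!
Pulling the quadric back along the curve gives the real binary form `∑ fᵢ²` of degree `2d`.
It vanishes at a parameter of each of the `2d - 2` points and of a point on each of the four
lines; these `2d + 2` parameters are distinct in `ℙ¹`, because their images are distinct (the
points are distinct and avoid the lines, which are pairwise disjoint). A binary form of degree
`2d` with `2d + 2` zeros in `ℙ¹` vanishes, so `∑ fᵢ² = 0`, and as the `fᵢ` are real
each of them is zero.
-/

open MvPolynomial

/-- The image in `ℙ³(ℂ)` of the map associated to real binary forms `f₀,…,f₃`. -/
def imageSet (f : Fin 4 → MvPolynomial (Fin 2) ℝ) :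
    Set (Projectivization ℂ (Fin 4 → ℂ)) :=
  {x | ∃ (a b : ℂ) (h : (fun i => eval ![a, b] (map (algebraMap ℝ ℂ) (f i))) ≠ 0),
    x = Projectivization.mk ℂ _ h}

open scoped LinearAlgebra.Projectivization

namespace MvPolynomial

theorem IsHomogeneous.eval_smul {σ R : Type*} [CommSemiring R] {φ : MvPolynomial σ R} {n : ℕ}
    (hφ : φ.IsHomogeneous n) (c : R) (x : σ → R) :
    eval (c • x) φ = c ^ n * eval x φ := by
  rw [eval_eq, eval_eq, Finset.mul_sum]
  refine Finset.sum_congr rfl fun m hm => ?_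
  have hdeg : ∑ i ∈ m.support, m i = n := by
    rw [← hφ (mem_support_iff.mp hm), Finsupp.weight_apply, Finsupp.sum]
    simp
  simp only [Pi.smul_apply, smul_eq_mul, mul_pow, Finset.prod_mul_distrib,
    Finset.prod_pow_eq_pow_sum, hdeg]
  ring

theorem IsHomogeneous.eval_zero {σ R : Type*} [CommSemiring R] {φ : MvPolynomial σ R} {n : ℕ}
    (hφ : φ.IsHomogeneous n) (hn : n ≠ 0) : eval 0 φ = 0 := by
  simpa [zero_pow hn] using hφ.eval_smul 0 0

theorem natDegree_aeval_X_one_le {R : Type*} [CommSemiring R] (φ : MvPolynomial (Fin 2) R) :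
    (aeval ![(Polynomial.X : Polynomial R), 1] φ).natDegree ≤ φ.totalDegree := by
  rw [aeval_def, eval₂_eq']
  refine Polynomial.natDegree_sum_le_of_forall_le _ _ fun m hm => ?_
  have hm0 : m 0 ≤ φ.totalDegree := by
    refine le_trans ?_ (le_totalDegree hm)
    simp [Finsupp.sum_fintype, Fin.sum_univ_two]
  simp only [Fin.prod_univ_two, Matrix.cons_val_zero, Matrix.cons_val_one, one_pow, mul_one,
    ← Polynomial.C_eq_algebraMap]
  exact (Polynomial.natDegree_C_mul_X_pow_le _ _).trans hm0

theorem eval_aeval_X_one {R : Type*} [CommSemiring R] (φ : MvPolynomial (Fin 2) R) (x : R) :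
    (aeval ![(Polynomial.X : Polynomial R), 1] φ).eval x = eval ![x, 1] φ := by
  have hx : (fun i => Polynomial.aeval x (![(Polynomial.X : Polynomial R), 1] i)) = ![x, 1] := by
    ext i; fin_cases i <;> simp
  rw [← Polynomial.coe_aeval_eq_eval, ← AlgHom.comp_apply, comp_aeval, hx]
  rfl

theorem eq_zero_of_sum_sq_eq_zero {σ ι R : Type*} [Field R] [LinearOrder R]
    [IsStrictOrderedRing R] [Fintype ι] {f : ι → MvPolynomial σ R} (h : ∑ i, f i ^ 2 = 0)
    (i : ι) : f i = 0 := by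
  refine MvPolynomial.funext fun x => ?_
  have hx := congrArg (eval x) h
  simp only [map_sum, map_pow, map_zero] at hx
  simpa using (Finset.sum_eq_zero_iff_of_nonneg fun j _ => sq_nonneg _).mp hx i (Finset.mem_univ i)

end MvPolynomial

namespace Projectivization

variable {K V : Type*}

theorem rep_mk_mem_iff [DivisionRing K] [AddCommGroup V] [Module K V] {W : Submodule K V}
    {v : V} (hv : v ≠ 0) : (mk K v hv).rep ∈ W ↔ v ∈ W := by
  obtain ⟨a, ha⟩ := exists_smul_eq_mk_rep K v hv
  rw [← ha, Submodule.smul_mem_iff']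

theorem injective_sumElim_of_rep_mem [DivisionRing K] [AddCommGroup V] [Module K V]
    {ι κ : Type*} {p : ι → ℙ K V} (hp : Function.Injective p) {ℓ : κ → Submodule K V}
    (hℓ : Pairwise fun i j => ℓ i ⊓ ℓ j = ⊥) (havoid : ∀ k j, (p k).rep ∉ ℓ j)
    {q : κ → ℙ K V} (hq : ∀ j, (q j).rep ∈ ℓ j) : Function.Injective (Sum.elim p q) := by
  refine hp.sumElim (fun j j' hjj' => ?_) fun k j hkj => havoid k j (hkj ▸ hq j)
  by_contra hne
  have hmem : (q j).rep ∈ ℓ j ⊓ ℓ j' := ⟨hq j, hjj' ▸ hq j'⟩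
  rw [hℓ hne, Submodule.mem_bot] at hmem
  exact (q j).rep_nonzero hmem

theorem mk_eq_mk_of_mul_eq_mul [Field K] {v w : Fin 2 → K} (hv : v ≠ 0) (hw : w ≠ 0)
    (h : v 0 * w 1 = w 0 * v 1) : mk K v hv = mk K w hw := by
  have hw' : w 0 ≠ 0 ∨ w 1 ≠ 0 := by
    by_contra! h0
    exact hw (funext fun i => by fin_cases i <;> simp [h0.1, h0.2])
  rw [mk_eq_mk_iff']
  rcases hw' with hw0 | hw1
  · refine ⟨v 0 / w 0, funext <| Fin.forall_fin_two.mpr ⟨by simp [hw0], ?_⟩⟩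
    rw [Pi.smul_apply, smul_eq_mul, div_mul_eq_mul_div, div_eq_iff hw0]
    linear_combination h
  · refine ⟨v 1 / w 1, funext <| Fin.forall_fin_two.mpr ⟨?_, by simp [hw1]⟩⟩
    rw [Pi.smul_apply, smul_eq_mul, div_mul_eq_mul_div, div_eq_iff hw1]
    linear_combination -h

theorem mk_eval_eq_mk_eval [Field K] {σ ι : Type*} {F : ι → MvPolynomial σ K} {n : ℕ}
    (hF : ∀ i, (F i).IsHomogeneous n) {u u' : σ → K} (hu : u ≠ 0) (hu' : u' ≠ 0)
    (hw : (fun i => eval u (F i)) ≠ 0) (hw' : (fun i => eval u' (F i)) ≠ 0)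
    (h : mk K u hu = mk K u' hu') :
    mk K (fun i => eval u (F i)) hw = mk K (fun i => eval u' (F i)) hw' := by
  obtain ⟨a, rfl⟩ := (mk_eq_mk_iff' K _ _ hu hu').mp h
  exact (mk_eq_mk_iff' K _ _ hw hw').mpr ⟨a ^ n, by ext i; simp [(hF i).eval_smul]⟩

theorem sum_sq_rep_mk_eq_zero_iff [Field K] {ι : Type*} [Fintype ι] {v : ι → K}
    (hv : v ≠ 0) :
    ∑ i, ((mk K v hv).rep i) ^ 2 = 0 ↔ ∑ i, v i ^ 2 = 0 := by
  obtain ⟨a, ha⟩ := exists_smul_eq_mk_rep K v hv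
  simp [← ha, Units.smul_def, mul_pow, ← Finset.mul_sum]

end Projectivization

open Projectivization

theorem MvPolynomial.IsHomogeneous.eq_zero_of_eval_eq_zero_of_card_lt {K ι : Type*} [Field K]
    [Fintype ι] {φ : MvPolynomial (Fin 2) K} {n : ℕ} (hφ : φ.IsHomogeneous n)
    (u : ι → Fin 2 → K) (hu : ∀ c, u c ≠ 0)
    (hinj : Function.Injective fun c => mk K (u c) (hu c))
    (hzero : ∀ c, eval (u c) φ = 0) (hcard : n + 1 < Fintype.card ι) : φ = 0 := by
  classical
  -- At most one zero is at infinity; the others give distinct roots of `φ(x, 1)`.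
  suffices hP : MvPolynomial.aeval ![(Polynomial.X : Polynomial K), 1] φ = 0 by
    rw [← Polynomial.homogenize_eq_of_isHomogeneous hφ hP, Polynomial.homogenize_zero]
  have hfin : Fintype.card {c // u c 1 = 0} ≤ 1 :=
    Fintype.card_le_one_iff.mpr fun c c' => Subtype.ext <| hinj <|
      mk_eq_mk_of_mul_eq_mul _ _ (by simp [c.2, c'.2])
  have hcard' : n < Fintype.card {c // u c 1 ≠ 0} := by
    rw [Fintype.card_subtype_compl]
    omega
  refine Polynomial.eq_zero_of_natDegree_lt_card_of_eval_eq_zero _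
    (f := fun c : {c // u c 1 ≠ 0} => u c 0 / u c 1) (fun c c' h => Subtype.ext <| hinj <|
      mk_eq_mk_of_mul_eq_mul _ _ ?_) (fun c => ?_)
    ((natDegree_aeval_X_one_le φ).trans_lt (hφ.totalDegree_le.trans_lt hcard'))
  · exact (div_eq_div_iff c.2 c'.2).mp h
  · have hsmul : u c = u c 1 • ![u c 0 / u c 1, 1] := by
      ext i; fin_cases i <;> simp [mul_div_cancel₀ _ c.2]
    have h := hzero c
    rw [hsmul, hφ.eval_smul] at h
    rw [eval_aeval_X_one]
    exact (mul_eq_zero.mp h).resolve_left (pow_ne_zero _ c.2)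

theorem no_odd_degree_real_curve_through_points_and_four_lines_general
    (d : ℕ) (hd : 1 ≤ d)
    (p : Fin (2 * d - 2) → Projectivization ℂ (Fin 4 → ℂ))
    (hpdist : Function.Injective p)
    (hpQ : ∀ k, ∑ i, ((p k).rep i) ^ 2 = 0)
    (ℓ : Fin 4 → Submodule ℂ (Fin 4 → ℂ))
    (hdisj : ∀ i j, i ≠ j → ℓ i ⊓ ℓ j = ⊥)
    (hiso : ∀ j, ∀ v ∈ ℓ j, ∑ k, (v k) ^ 2 = 0)
    (havoid : ∀ k j, (p k).rep ∉ ℓ j) :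
    ¬ ∃ f : Fin 4 → MvPolynomial (Fin 2) ℝ,
      (∀ i, (f i).IsHomogeneous d) ∧ (∃ i, f i ≠ 0) ∧
      (∀ k, p k ∈ imageSet f) ∧
      (∀ j, ∃ a b : ℂ,
        (fun i => eval ![a, b] (map (algebraMap ℝ ℂ) (f i))) ≠ 0 ∧
        (fun i => eval ![a, b] (map (algebraMap ℝ ℂ) (f i))) ∈ ℓ j) := by
  rintro ⟨f, hf, ⟨i₀, hi₀⟩, himg, hline⟩
  choose a b hwp hpk using himg
  choose a' b' hwℓ hmem using hline
  have hF (i : Fin 4) : (map (algebraMap ℝ ℂ) (f i)).IsHomogeneous d := (hf i).map _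
  let u : Fin (2 * d - 2) ⊕ Fin 4 → Fin 2 → ℂ :=
    Sum.elim (fun k => ![a k, b k]) fun j => ![a' j, b' j]
  have hw : ∀ c, (fun i => eval (u c) (map (algebraMap ℝ ℂ) (f i))) ≠ 0 := Sum.rec hwp hwℓ
  have hu : ∀ c, u c ≠ 0 := fun c hc =>
    hw c (funext fun i => by simp only [hc, (hF i).eval_zero (by omega), Pi.zero_apply])
  have hW : ∀ c, Sum.elim p (fun j => mk ℂ _ (hw (.inr j))) c = mk ℂ _ (hw c) :=
    Sum.rec hpk fun _ => rfl
  have hinj : Function.Injective fun c => mk ℂ (u c) (hu c) := fun c c' h =>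
    injective_sumElim_of_rep_mem hpdist hdisj havoid (fun j => (rep_mk_mem_iff _).mpr (hmem j))
      ((hW c).trans ((mk_eval_eq_mk_eval hF _ _ _ _ h).trans (hW c').symm))
  have hzero : ∀ c, ∑ i, eval (u c) (map (algebraMap ℝ ℂ) (f i)) ^ 2 = 0 :=
    Sum.rec (fun k => (sum_sq_rep_mk_eq_zero_iff _).mp (hpk k ▸ hpQ k)) fun j => hiso j _ (hmem j)
  have hG : (map (algebraMap ℝ ℂ) (∑ i, f i ^ 2)).IsHomogeneous (d * 2) :=
    (IsHomogeneous.sum _ _ _ fun i _ => (hf i).pow 2).map _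
  have hcard : d * 2 + 1 < Fintype.card (Fin (2 * d - 2) ⊕ Fin 4) := by
    simp only [Fintype.card_sum, Fintype.card_fin]
    omega
  have hsum : ∑ i, f i ^ 2 = 0 := by
    refine MvPolynomial.map_injective _ (algebraMap ℝ ℂ).injective ?_
    rw [map_zero]
    exact hG.eq_zero_of_eval_eq_zero_of_card_lt u hu hinj (fun c => by simpa using hzero c) hcard
  exact hi₀ (eq_zero_of_sum_sq_eq_zero hsum i₀)

/-- For odd `d`, `2d − 2` distinct points on the empty quadric together with
four pairwise disjoint isotropic lines avoiding them cannot all be met by a degree-`d` rational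
curve parametrized by real forms. -/
theorem no_odd_degree_real_curve_through_points_and_four_lines
    (d : ℕ) (hd : 1 ≤ d) (hodd : Odd d)
    (p : Fin (2 * d - 2) → Projectivization ℂ (Fin 4 → ℂ))
    (hpdist : Function.Injective p)
    (hpQ : ∀ k, ∑ i, ((p k).rep i) ^ 2 = 0)
    (ℓ : Fin 4 → Submodule ℂ (Fin 4 → ℂ))
    (hdim : ∀ j, Module.finrank ℂ (ℓ j) = 2)
    (hdisj : ∀ i j, i ≠ j → ℓ i ⊓ ℓ j = ⊥)
    (hiso : ∀ j, ∀ v ∈ ℓ j, ∑ k, (v k) ^ 2 = 0)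
    (havoid : ∀ k j, (p k).rep ∉ ℓ j) :
    ¬ ∃ f : Fin 4 → MvPolynomial (Fin 2) ℝ,
      (∀ i, (f i).IsHomogeneous d) ∧ (∃ i, f i ≠ 0) ∧
      (∀ k, p k ∈ imageSet f) ∧
      (∀ j, ∃ a b : ℂ,
        (fun i => eval ![a, b] (map (algebraMap ℝ ℂ) (f i))) ≠ 0 ∧
        (fun i => eval ![a, b] (map (algebraMap ℝ ℂ) (f i))) ∈ ℓ j) :=
  no_odd_degree_real_curve_through_points_and_four_lines_general d hd p hpdist hpQ ℓ hdisj hiso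
    havoid
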